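/- arXiv:1603.08723 — 2 statements merged into one kernel-verified Lean document; each statement's English description precedes it below -/
import Mathlib

section
/- For β > 0 define f : [0,∞) → (0, Γ(β)] by f(t) = ∫_t^∞ e^{−y} y^{β−1} dy. Then f is a strictly decreasing continuous bijection from [0,∞) onto (0, Γ(β)], and its inverse g : (0, Γ(β)] → [0,∞) satisfies lim_{u→0⁺} g(u) / log(1/u) = 1. -/
/-!
The integrand `e^{-y} y^{β-1}` is positive and integrable on `(0, ∞)`, so its tail integral
decreases strictly and continuously from `Γ(β)` to `0`. The factor `y^{β-1}` is sub-exponential: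
for `a < 1 < a'` we have `e^{-a'y} ≤ e^{-y} y^{β-1} ≤ e^{-ay}` for large `y`, hence
`e^{-a't}/a' ≤ f(t) ≤ e^{-at}/a` for large `t` and `-log f(t) / t → 1`. Since `g(u) → ∞` as
`u → 0⁺`, substituting `t = g(u)` gives `g(u) / log(1/u) → 1`.
-/

open Filter MeasureTheory Set Real Topology

noncomputable def upperIncompleteGamma (β t : ℝ) : ℝ :=
  ∫ y in Ioi t, exp (-y) * y ^ (β - 1)

lemma rpow_le_exp_mul_eventually (s : ℝ) {ε : ℝ} (hε : 0 < ε) :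
    ∀ᶠ y in atTop, y ^ s ≤ exp (ε * y) := by
  filter_upwards [(isLittleO_rpow_exp_pos_mul_atTop s hε).eventuallyLE,
    eventually_gt_atTop 0] with y hy hy0
  rwa [norm_of_nonneg (rpow_nonneg hy0.le s), norm_of_nonneg (exp_pos _).le] at hy

lemma integral_exp_neg_mul_Ioi {a : ℝ} (ha : 0 < a) (c : ℝ) :
    ∫ y in Ioi c, exp (-a * y) = exp (-a * c) / a := by
  rw [integral_exp_mul_Ioi (neg_neg_of_pos ha), neg_div_neg_eq]

lemma eventually_setIntegral_Ioi_le {f g : ℝ → ℝ}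
    (hf : ∀ᶠ t in atTop, IntegrableOn f (Ioi t)) (hg : ∀ᶠ t in atTop, IntegrableOn g (Ioi t))
    (hfg : ∀ᶠ y in atTop, f y ≤ g y) :
    ∀ᶠ t in atTop, ∫ y in Ioi t, f y ≤ ∫ y in Ioi t, g y := by
  obtain ⟨A, hA⟩ := eventually_atTop.1 hfg
  filter_upwards [hf, hg, eventually_ge_atTop A] with t hft hgt htA
  exact setIntegral_mono_on hft hgt measurableSet_Ioi fun y hy => hA y (htA.trans (le_of_lt hy))

lemma tendsto_neg_log_div_self_of_exp_bounds {φ : ℝ → ℝ}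
    (hup : ∀ a, 0 < a → a < 1 → ∀ᶠ t in atTop, φ t ≤ exp (-a * t) / a)
    (hlow : ∀ a, 1 < a → ∀ᶠ t in atTop, exp (-a * t) / a ≤ φ t) :
    Tendsto (fun t => -log (φ t) / t) atTop (𝓝 1) := by
  have hbound : ∀ a, 0 < a → ∀ t, -log (exp (-a * t) / a) = a * t + log a := fun a ha t => by
    rw [log_div (exp_pos _).ne' ha.ne', log_exp]; ring
  have hlim : ∀ a, Tendsto (fun t => (a * t + log a) / t) atTop (𝓝 a) := fun a => by
    have h := (tendsto_const_nhds (x := a)).add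
      ((tendsto_const_nhds (x := log a)).div_atTop tendsto_id)
    rw [add_zero] at h
    refine h.congr' ?_
    filter_upwards [eventually_ne_atTop 0] with t ht
    rw [add_div, mul_div_cancel_right₀ a ht, id]
  have hpos : ∀ᶠ t in atTop, 0 < φ t :=
    (hlow 2 one_lt_two).mono fun t ht => lt_of_lt_of_le (by positivity) ht
  refine tendsto_order.2 ⟨fun b hb => ?_, fun b hb => ?_⟩
  · obtain ⟨a, hba, ha1⟩ := exists_between (show max b 0 < 1 from max_lt hb one_pos)
    have ha0 : 0 < a := (le_max_right b 0).trans_lt hba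
    filter_upwards [hup a ha0 ha1, hpos, eventually_gt_atTop 0,
      (hlim a).eventually (eventually_gt_nhds ((le_max_left b 0).trans_lt hba))]
      with t hφt hφ0 ht hbt
    calc b < (a * t + log a) / t := hbt
      _ ≤ -log (φ t) / t := by
        gcongr
        rw [← hbound a ha0]
        exact neg_le_neg (log_le_log hφ0 hφt)
  · obtain ⟨a, h1a, hab⟩ := exists_between hb
    have ha0 : 0 < a := one_pos.trans h1a
    filter_upwards [hlow a h1a, eventually_gt_atTop 0,
      (hlim a).eventually (eventually_lt_nhds hab)] with t hφt ht hbt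
    calc -log (φ t) / t ≤ (a * t + log a) / t := by
          gcongr
          rw [← hbound a ha0]
          exact neg_le_neg (log_le_log (by positivity) hφt)
      _ < b := hbt

lemma tendsto_nhdsGT_atTop_of_antitoneOn_of_rightInv {f g : ℝ → ℝ}
    (hf : AntitoneOn f (Ici 0)) (hpos : ∀ t, 0 ≤ t → 0 < f t)
    (hg : ∀ᶠ u in 𝓝[>] 0, 0 ≤ g u ∧ f (g u) = u) :
    Tendsto g (𝓝[>] 0) atTop := by
  refine tendsto_atTop.2 fun T => ?_
  have hT : (0 : ℝ) ≤ max T 0 := le_max_right T 0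
  filter_upwards [hg, Ioo_mem_nhdsGT (hpos _ hT)] with u ⟨hgu, hfgu⟩ hu
  by_contra! hlt
  have := hf hgu hT (hlt.le.trans (le_max_left T 0))
  linarith [hu.2]

namespace upperIncompleteGamma

variable {β : ℝ}

lemma integrableOn_Ioi (hβ : 0 < β) {t : ℝ} (ht : 0 ≤ t) :
    IntegrableOn (fun y => exp (-y) * y ^ (β - 1)) (Ioi t) :=
  (GammaIntegral_convergent hβ).mono_set (Ioi_subset_Ioi ht)

lemma apply_zero (hβ : 0 < β) : upperIncompleteGamma β 0 = Gamma β :=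
  (Gamma_eq_integral hβ).symm

lemma strictAntiOn (hβ : 0 < β) : StrictAntiOn (upperIncompleteGamma β) (Ici 0) := by
  intro s hs t _ hst
  have hint := integrableOn_Ioi hβ hs
  rw [← sub_pos, upperIncompleteGamma, upperIncompleteGamma,
    intervalIntegral.integral_Ioi_sub_Ioi hint hst.le]
  refine intervalIntegral.intervalIntegral_pos_of_pos_on ?_ (fun y hy => ?_) hst
  · exact (intervalIntegrable_iff_integrableOn_Ioc_of_le hst.le).2
      (hint.mono_set Ioc_subset_Ioi_self)
  · have hy0 : 0 < y := lt_of_le_of_lt hs hy.1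
    exact mul_pos (exp_pos _) (rpow_pos_of_pos hy0 _)

lemma pos (hβ : 0 < β) {t : ℝ} (ht : 0 ≤ t) : 0 < upperIncompleteGamma β t := by
  have htail : 0 ≤ upperIncompleteGamma β (t + 1) :=
    setIntegral_nonneg measurableSet_Ioi fun y (hy : t + 1 < y) =>
      mul_nonneg (exp_pos _).le (rpow_nonneg (by linarith) _)
  exact htail.trans_lt
    (strictAntiOn hβ (mem_Ici.2 ht) (mem_Ici.2 (by linarith)) (lt_add_one t))

lemma continuousOn (hβ : 0 < β) : ContinuousOn (upperIncompleteGamma β) (Ici 0) :=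
  (integrableOn_Ioi hβ le_rfl).continuousOn_Ici_primitive_Ioi

lemma tendsto_atTop_zero : Tendsto (upperIncompleteGamma β) atTop (𝓝 0) :=
  tendsto_integral_Ioi_zero tendsto_id

lemma bijOn (hβ : 0 < β) :
    BijOn (upperIncompleteGamma β) (Ici 0) (Ioc 0 (Gamma β)) := by
  refine ⟨fun t ht => ⟨pos hβ ht, ?_⟩, (strictAntiOn hβ).injOn, fun u hu => ?_⟩
  · rw [← apply_zero hβ]
    exact (strictAntiOn hβ).antitoneOn self_mem_Ici ht ht
  · obtain ⟨T, hTu, hT⟩ :=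
      ((tendsto_atTop_zero.eventually_lt_const hu.1).and (eventually_ge_atTop 0)).exists
    obtain ⟨t, ht, rfl⟩ := intermediate_value_Icc' hT ((continuousOn hβ).mono Icc_subset_Ici_self)
      ⟨hTu.le, (apply_zero hβ).symm ▸ hu.2⟩
    exact ⟨t, ht.1, rfl⟩

lemma eventually_le_exp (hβ : 0 < β) {a : ℝ} (ha : 0 < a) (ha1 : a < 1) :
    ∀ᶠ t in atTop, upperIncompleteGamma β t ≤ exp (-a * t) / a := by
  filter_upwards [eventually_setIntegral_Ioi_le
    ((eventually_ge_atTop 0).mono fun t => integrableOn_Ioi hβ)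
    (Eventually.of_forall fun t => exp_neg_integrableOn_Ioi t ha)
    ((rpow_le_exp_mul_eventually (β - 1) (sub_pos.2 ha1)).mono fun y hy => by
      calc exp (-y) * y ^ (β - 1) ≤ exp (-y) * exp ((1 - a) * y) := by gcongr
        _ = exp (-a * y) := by rw [← exp_add]; ring_nf)] with t ht
  rwa [← integral_exp_neg_mul_Ioi ha]

lemma eventually_exp_le (hβ : 0 < β) {a : ℝ} (ha : 1 < a) :
    ∀ᶠ t in atTop, exp (-a * t) / a ≤ upperIncompleteGamma β t := by
  have ha0 : 0 < a := one_pos.trans ha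
  filter_upwards [eventually_setIntegral_Ioi_le
    (Eventually.of_forall fun t => exp_neg_integrableOn_Ioi t ha0)
    ((eventually_ge_atTop 0).mono fun t => integrableOn_Ioi hβ)
    ((rpow_le_exp_mul_eventually (1 - β) (sub_pos.2 ha)).mp
      ((eventually_gt_atTop 0).mono fun y hy0 hy => by
        have hinv : exp (-(a - 1) * y) ≤ y ^ (β - 1) := by
          rw [neg_mul, exp_neg, ← neg_sub 1 β, rpow_neg hy0.le]
          exact inv_anti₀ (rpow_pos_of_pos hy0 _) hy
        calc exp (-a * y) = exp (-y) * exp (-(a - 1) * y) := by rw [← exp_add]; ring_nf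
          _ ≤ exp (-y) * y ^ (β - 1) := by gcongr))] with t ht
  rwa [← integral_exp_neg_mul_Ioi ha0]

lemma tendsto_neg_log_div_self (hβ : 0 < β) :
    Tendsto (fun t => -log (upperIncompleteGamma β t) / t) atTop (𝓝 1) :=
  tendsto_neg_log_div_self_of_exp_bounds (fun _ ha ha1 => eventually_le_exp hβ ha ha1)
    (fun _ ha => eventually_exp_le hβ ha)

end upperIncompleteGamma

open upperIncompleteGamma in
theorem stmt15 (β : ℝ) (hβ : 0 < β)
    (f : ℝ → ℝ)
    (hf : ∀ t : ℝ, f t = ∫ y in Set.Ioi t, Real.exp (-y) * y ^ (β - 1)) :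
    StrictAntiOn f (Set.Ici 0) ∧
    ContinuousOn f (Set.Ici 0) ∧
    Set.BijOn f (Set.Ici 0) (Set.Ioc 0 (Real.Gamma β)) ∧
    ∃ g : ℝ → ℝ,
      (∀ t ≥ (0:ℝ), g (f t) = t) ∧
      (∀ u ∈ Set.Ioc (0:ℝ) (Real.Gamma β), f (g u) = u ∧ 0 ≤ g u) ∧
      Tendsto (fun u => g u / Real.log (1 / u)) (nhdsWithin 0 (Set.Ioi 0))
        (nhds 1) := by
  obtain rfl : f = upperIncompleteGamma β := funext hf
  have hbij := bijOn hβ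
  set g := Function.invFunOn (upperIncompleteGamma β) (Ici 0)
  have hinv : ∀ u ∈ Ioc 0 (Gamma β), upperIncompleteGamma β (g u) = u ∧ 0 ≤ g u :=
    fun u hu => ⟨hbij.invOn_invFunOn.2 hu, hbij.surjOn.mapsTo_invFunOn hu⟩
  have hnear : ∀ᶠ u in 𝓝[>] 0, u ∈ Ioc 0 (Gamma β) :=
    eventually_of_mem (Ioo_mem_nhdsGT (Gamma_pos_of_pos hβ)) fun u hu => ⟨hu.1, hu.2.le⟩
  have hg : Tendsto g (𝓝[>] 0) atTop :=
    tendsto_nhdsGT_atTop_of_antitoneOn_of_rightInv (strictAntiOn hβ).antitoneOn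
      (fun t => pos hβ) (hnear.mono fun u hu => (hinv u hu).symm)
  have hlim : Tendsto (fun t => t / -log (upperIncompleteGamma β t)) atTop (𝓝 1) := by
    simpa using (tendsto_neg_log_div_self hβ).inv₀ one_ne_zero
  refine ⟨strictAntiOn hβ, continuousOn hβ, hbij, g, fun t ht => hbij.invOn_invFunOn.1 ht,
    hinv, (hlim.comp hg).congr' ?_⟩
  filter_upwards [hnear] with u hu
  simp only [Function.comp_apply, (hinv u hu).1, one_div, log_inv]
end

section
/- Let α ∈ (0,1) and let w_*(x) = x^α for x ≥ 0. Then for all x, y ≥ 0 with y ≤ x, one has x^α ≤ y^α + (x−y)^α, and moreover there exists s ∈ (0,1] (in fact s = 2 − 2^α works for the regime y = x/2) such that x^α ≤ y^α + (x−y)^α − s·min(y^α, (x−y)^α) holds for all x ≥ 2 and 0 ≤ y ≤ x with min(y, x−y) ≥ 1. -/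
/-!
Subadditivity of `x ↦ x ^ α` is concavity. For the defect, write `a + b = b (1 + a / b)` with
`a ≤ b`: Bernoulli's inequality gives `(a + b) ^ α ≤ b ^ α + α a b ^ (α - 1)`, and since
`t ↦ t ^ (α - 1)` is decreasing, `a b ^ (α - 1) ≤ a ^ α`. Hence `s = 1 - α` works.
-/

open Real

lemma rpow_add_le_mul_rpow_add_rpow {p a b : ℝ} (hp0 : 0 ≤ p) (hp1 : p ≤ 1) (ha : 0 < a)
    (hab : a ≤ b) : (a + b) ^ p ≤ p * a ^ p + b ^ p := by
  have hb : 0 < b := ha.trans_le hab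
  have hbernoulli : (1 + a / b) ^ p ≤ 1 + p * (a / b) :=
    rpow_one_add_le_one_add_mul_self (by linarith [div_pos ha hb]) hp0 hp1
  have hdecay : b ^ p / b ≤ a ^ p / a := by
    rw [← rpow_sub_one hb.ne', ← rpow_sub_one ha.ne']
    exact rpow_le_rpow_of_nonpos ha hab (by linarith)
  calc (a + b) ^ p = b ^ p * (1 + a / b) ^ p := by
        rw [← mul_rpow hb.le (by positivity), mul_one_add, mul_div_cancel₀ _ hb.ne', add_comm]
    _ ≤ b ^ p * (1 + p * (a / b)) := by gcongr
    _ = p * a * (b ^ p / b) + b ^ p := by ring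
    _ ≤ p * a * (a ^ p / a) + b ^ p := by gcongr
    _ = p * a ^ p + b ^ p := by field_simp

lemma rpow_add_le_add_rpow_sub_mul_min {p a b : ℝ} (hp0 : 0 ≤ p) (hp1 : p ≤ 1) (ha : 0 < a)
    (hb : 0 < b) : (a + b) ^ p ≤ a ^ p + b ^ p - (1 - p) * min (a ^ p) (b ^ p) := by
  rcases le_total a b with hab | hba
  · rw [min_eq_left (rpow_le_rpow ha.le hab hp0)]
    linarith [rpow_add_le_mul_rpow_add_rpow hp0 hp1 ha hab]
  · rw [min_eq_right (rpow_le_rpow hb.le hba hp0), add_comm a]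
    linarith [rpow_add_le_mul_rpow_add_rpow hp0 hp1 hb hba]

theorem stmt19 (α : ℝ) (hα0 : 0 < α) (hα1 : α < 1) :
    (∀ x y : ℝ, 0 ≤ y → y ≤ x → x ^ α ≤ y ^ α + (x - y) ^ α) ∧
    ∃ s : ℝ, 0 < s ∧ s ≤ 1 ∧
      ∀ x y : ℝ, 2 ≤ x → 0 ≤ y → y ≤ x → 1 ≤ min y (x - y) →
        x ^ α ≤ y ^ α + (x - y) ^ α - s * min (y ^ α) ((x - y) ^ α) := by
  refine ⟨fun x y hy hyx => ?_, 1 - α, by linarith, by linarith, fun x y _ _ _ hmin => ?_⟩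
  · simpa using rpow_add_le_add_rpow hy (sub_nonneg.2 hyx) hα0.le hα1.le
  · have hy : 0 < y := by linarith [min_le_left y (x - y)]
    have hxy : 0 < x - y := by linarith [min_le_right y (x - y)]
    simpa using rpow_add_le_add_rpow_sub_mul_min hα0.le hα1.le hy hxy
end
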